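/- Let εK, εN ≥ 0 with εK + εN < 1. Consider minimizing KL(μK ‖ μN) over pairs (μK, μN) of Borel probability measures on [0,1] subject to E_{X∼μK}[1 − X] ≤ εK and E_{X∼μN}[X] ≤ εN. Then the minimum is attained at μK* = Bern(1 − εK) (the measure placing mass 1−εK at 1 and εK at 0) and μN* = Bern(εN) (mass εN at 1 and 1−εN at 0), so the minimum value equals KL(Bern(1−εK) ‖ Bern(εN)). -/

import Mathlib

/-!
Both constraints only see the means `a = E_{μK}[X]` and `b = E_{μN}[X]`, and
`b ≤ εN < 1 − εK ≤ a`. Pick an affine `t ↦ q + r t` mapping `[0,1]` into itself with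
`a ↦ 1 − εK` and `b ↦ εN`. The Markov kernel `x ↦ Bern(q + r x)` then sends `μK` to
`Bern(1 − εK)` and `μN` to `Bern(εN)`, so the data processing inequality for KL gives the bound.
-/

open MeasureTheory
open scoped ENNReal

abbrev I01 : Set ℝ := Set.Icc 0 1

open Classical in
/-- Kullback–Leibler divergence with logarithm base 2, valued in `EReal`. -/
noncomputable def klDiv2 {α : Type*} [MeasurableSpace α] (μ ν : Measure α) : EReal :=
  if μ ≪ ν ∧ Integrable (fun x => Real.logb 2 ((μ.rnDeriv ν x).toReal)) μ
  then ((∫ x, Real.logb 2 ((μ.rnDeriv ν x).toReal) ∂μ : ℝ) : EReal)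
  else ⊤

/-- The Bernoulli measure on `[0,1]`: mass `a` at `1` and mass `1−a` at `0`. -/
noncomputable def bern01 (a : ℝ) : Measure I01 :=
  (ENNReal.ofReal a) • Measure.dirac ⟨1, Set.right_mem_Icc.mpr zero_le_one⟩
    + (ENNReal.ofReal (1 - a)) • Measure.dirac ⟨0, Set.left_mem_Icc.mpr zero_le_one⟩

/-- Feasibility for the FNR/FPR constraints. -/
def FeasBin (εK εN : ℝ) (μK μN : Measure I01) : Prop :=
  IsProbabilityMeasure μK ∧ IsProbabilityMeasure μN ∧
    (∫⁻ x, ENNReal.ofReal (1 - (x : ℝ)) ∂μK) ≤ ENNReal.ofReal εK ∧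
    (∫⁻ x, ENNReal.ofReal (x : ℝ) ∂μN) ≤ ENNReal.ofReal εN

open ProbabilityTheory InformationTheory

section klDiv2

variable {α β : Type*} [MeasurableSpace α] [MeasurableSpace β]

lemma integrable_logb_two_rnDeriv_iff (μ ν : Measure α) :
    Integrable (fun x => Real.logb 2 ((μ.rnDeriv ν x).toReal)) μ ↔ Integrable (llr μ ν) μ := by
  simp_rw [Real.logb, div_eq_mul_inv]
  exact integrable_mul_const_iff (Real.log_pos one_lt_two).ne'.isUnit.inv (llr μ ν)

lemma klDiv2_eq_top {μ ν : Measure α} (h : klDiv μ ν = ∞) : klDiv2 μ ν = ⊤ := by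
  rw [klDiv2, if_neg]
  rintro ⟨hac, hint⟩
  exact klDiv_eq_top_iff.1 h hac ((integrable_logb_two_rnDeriv_iff μ ν).1 hint)

lemma klDiv2_eq_toReal_klDiv_div_log_two {μ ν : Measure α} [IsFiniteMeasure μ] [IsFiniteMeasure ν]
    (h_eq : μ Set.univ = ν Set.univ) (h : klDiv μ ν ≠ ∞) : klDiv2 μ ν = ((klDiv μ ν).toReal / Real.log 2 : ℝ) := by
  obtain ⟨hac, hint⟩ := klDiv_ne_top_iff.1 h
  rw [klDiv2, if_pos ⟨hac, (integrable_logb_two_rnDeriv_iff μ ν).2 hint⟩,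
    toReal_klDiv_of_measure_eq hac h_eq, ← integral_div]
  rfl

lemma klDiv2_le_klDiv2_of_klDiv_le {μ ν : Measure α} {μ' ν' : Measure β} [IsFiniteMeasure μ]
    [IsFiniteMeasure ν] [IsFiniteMeasure μ'] [IsFiniteMeasure ν']
    (h_eq : μ Set.univ = ν Set.univ) (h_eq' : μ' Set.univ = ν' Set.univ)
    (h : klDiv μ ν ≤ klDiv μ' ν') : klDiv2 μ ν ≤ klDiv2 μ' ν' := by
  by_cases htop : klDiv μ' ν' = ∞
  · rw [klDiv2_eq_top htop]
    exact le_top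
  have htop₀ : klDiv μ ν ≠ ∞ := ne_top_of_le_ne_top htop h
  rw [klDiv2_eq_toReal_klDiv_div_log_two h_eq htop₀, klDiv2_eq_toReal_klDiv_div_log_two h_eq' htop,
    EReal.coe_le_coe_iff]
  gcongr

end klDiv2

section bern01

variable {α : Type*} [MeasurableSpace α]

lemma bern01_apply (a : ℝ) {s : Set I01} (hs : MeasurableSet s) :
    bern01 a s = ENNReal.ofReal a * s.indicator 1 ⟨1, Set.right_mem_Icc.mpr zero_le_one⟩
      + ENNReal.ofReal (1 - a) * s.indicator 1 ⟨0, Set.left_mem_Icc.mpr zero_le_one⟩ := by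
  simp [bern01, Measure.dirac_apply' _ hs]

lemma lintegral_bern01 (a : ℝ) {g : I01 → ℝ≥0∞} (hg : Measurable g) :
    ∫⁻ x, g x ∂bern01 a = ENNReal.ofReal a * g ⟨1, Set.right_mem_Icc.mpr zero_le_one⟩
      + ENNReal.ofReal (1 - a) * g ⟨0, Set.left_mem_Icc.mpr zero_le_one⟩ := by
  simp [bern01, lintegral_dirac' _ hg]

lemma isProbabilityMeasure_bern01 {a : ℝ} (h0 : 0 ≤ a) (h1 : a ≤ 1) :
    IsProbabilityMeasure (bern01 a) := by
  constructor
  simp [bern01_apply a MeasurableSet.univ, ← ENNReal.ofReal_add h0 (sub_nonneg.2 h1)]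

noncomputable def bernKernel (φ : α → I01) (hφ : Measurable φ) : Kernel α I01 where
  toFun x := bern01 (φ x)
  measurable' := Measure.measurable_of_measurable_coe _ fun s hs => by
    simp_rw [bern01_apply _ hs]
    fun_prop

instance (φ : α → I01) (hφ : Measurable φ) : IsMarkovKernel (bernKernel φ hφ) :=
  ⟨fun x => isProbabilityMeasure_bern01 (φ x).2.1 (φ x).2.2⟩

lemma integral_le_of_lintegral_ofReal_le {μ : Measure α} {f : α → ℝ} {c : ℝ}
    (hf : 0 ≤ᵐ[μ] f) (hfm : AEStronglyMeasurable f μ) (hc : 0 ≤ c)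
    (h : ∫⁻ x, ENNReal.ofReal (f x) ∂μ ≤ ENNReal.ofReal c) : ∫ x, f x ∂μ ≤ c := by
  rw [integral_eq_lintegral_of_nonneg_ae hf hfm]
  exact ENNReal.toReal_le_of_le_ofReal hc h

lemma integrable_coe_I01 (μ : Measure α) [IsFiniteMeasure μ] {X : α → I01} (hX : Measurable X) :
    Integrable (fun x => (X x : ℝ)) μ :=
  .of_bound (measurable_subtype_coe.comp hX).aestronglyMeasurable 1 <| ae_of_all _ fun x => by
    simpa [abs_of_nonneg (X x).2.1] using (X x).2.2

lemma bernKernel_comp (φ : α → I01) (hφ : Measurable φ) (μ : Measure α) [IsProbabilityMeasure μ] :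
    bernKernel φ hφ ∘ₘ μ = bern01 (∫ x, (φ x : ℝ) ∂μ) := by
  ext s hs
  have hint := integrable_coe_I01 μ hφ
  have hmean : ∫⁻ x, ENNReal.ofReal (φ x) ∂μ = ENNReal.ofReal (∫ x, (φ x : ℝ) ∂μ) :=
    (ofReal_integral_eq_lintegral_ofReal hint (ae_of_all _ fun x => (φ x).2.1)).symm
  have hmean' : ∫⁻ x, ENNReal.ofReal (1 - φ x) ∂μ = ENNReal.ofReal (1 - ∫ x, (φ x : ℝ) ∂μ) := by
    rw [← ofReal_integral_eq_lintegral_ofReal (f := fun x => 1 - (φ x : ℝ))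
      ((integrable_const 1).sub hint) (ae_of_all _ fun x => sub_nonneg.2 (φ x).2.2),
      integral_sub (integrable_const 1) hint]
    simp
  rw [Measure.bind_apply hs (Kernel.aemeasurable _), bern01_apply _ hs, ← hmean, ← hmean',
    ← lintegral_mul_const _ (by fun_prop), ← lintegral_mul_const _ (by fun_prop),
    ← lintegral_add_left (by fun_prop)]
  exact lintegral_congr fun x => bern01_apply _ hs

lemma exists_affine_mapsTo_I01 {a b a' b' : ℝ} (hb : 0 ≤ b) (hbb' : b ≤ b') (hb'a' : b' < a')
    (ha'a : a' ≤ a) (ha : a ≤ 1) :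
    ∃ q r : ℝ, Set.MapsTo (fun x => q + r * x) I01 I01 ∧ q + r * a = a' ∧ q + r * b = b' := by
  have hab : 0 < a - b := by linarith
  set r := (a' - b') / (a - b)
  have hr0 : 0 ≤ r := div_nonneg (by linarith) hab.le
  have hr1 : r ≤ 1 := (div_le_one hab).2 (by linarith)
  have hra : r * (a - b) = a' - b' := div_mul_cancel₀ _ hab.ne'
  refine ⟨b' - r * b, r, fun x ⟨hx0, hx1⟩ => ⟨?_, ?_⟩, by linarith, by ring⟩
  · nlinarith
  · nlinarith

theorem klDiv_bern01_le {μ ν : Measure α} [IsProbabilityMeasure μ] [IsProbabilityMeasure ν]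
    {X : α → I01} (hX : Measurable X) {a b : ℝ} (hb : ∫ x, (X x : ℝ) ∂ν ≤ b) (hba : b < a)
    (ha : a ≤ ∫ x, (X x : ℝ) ∂μ) :
    klDiv (bern01 a) (bern01 b) ≤ klDiv μ ν := by
  have hle_one : ∫ x, (X x : ℝ) ∂μ ≤ 1 := by
    simpa using integral_mono (integrable_coe_I01 μ hX) (integrable_const 1) fun x => (X x).2.2
  obtain ⟨q, r, hmaps, hqa, hqb⟩ := exists_affine_mapsTo_I01
    (integral_nonneg fun x => (X x).2.1) hb hba ha hle_one
  let φ : α → I01 := fun x => ⟨q + r * X x, hmaps (X x).2⟩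
  have hφ : Measurable φ := by fun_prop
  have hmean (ρ : Measure α) [IsProbabilityMeasure ρ] :
      ∫ x, (φ x : ℝ) ∂ρ = q + r * ∫ x, (X x : ℝ) ∂ρ := by
    rw [integral_add (integrable_const q) ((integrable_coe_I01 ρ hX).const_mul r),
      integral_const_mul]
    simp
  have hcomp := klDiv_comp_right_le μ ν (bernKernel φ hφ)
  rwa [bernKernel_comp, bernKernel_comp, hmean, hmean, hqa, hqb] at hcomp

end bern01

theorem stmt_13 (εK εN : ℝ) (hεK : 0 ≤ εK) (hεN : 0 ≤ εN) (hsum : εK + εN < 1) :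
    -- (Bern(1−εK), Bern(εN)) is feasible,
    FeasBin εK εN (bern01 (1 - εK)) (bern01 εN) ∧
    -- and it attains the minimum of KL over the feasible region
    (∀ μK μN : Measure I01, FeasBin εK εN μK μN →
      klDiv2 (bern01 (1 - εK)) (bern01 εN) ≤ klDiv2 μK μN) := by
  have : IsProbabilityMeasure (bern01 (1 - εK)) :=
    isProbabilityMeasure_bern01 (by linarith) (by linarith)
  have : IsProbabilityMeasure (bern01 εN) := isProbabilityMeasure_bern01 hεN (by linarith)
  refine ⟨⟨inferInstance, inferInstance, ?_, ?_⟩, fun μK μN ⟨hμK, hμN, hK, hN⟩ => ?_⟩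
  · simp [lintegral_bern01 _ (by fun_prop : Measurable fun x : I01 => ENNReal.ofReal (1 - x))]
  · simp [lintegral_bern01 _ (by fun_prop : Measurable fun x : I01 => ENNReal.ofReal x)]
  have hmeanK : 1 - εK ≤ ∫ x, (x : ℝ) ∂μK := by
    have hint : Integrable (fun x : I01 => (x : ℝ)) μK := integrable_coe_I01 μK measurable_id
    have := integral_le_of_lintegral_ofReal_le (ae_of_all _ fun x => sub_nonneg.2 x.2.2)
      (by fun_prop) hεK hK
    rw [integral_sub (integrable_const 1) hint] at this
    simp only [integral_const, probReal_univ, smul_eq_mul, mul_one, tsub_le_iff_right] at this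
    linarith
  have hmeanN : ∫ x, (x : ℝ) ∂μN ≤ εN :=
    integral_le_of_lintegral_ofReal_le (ae_of_all _ fun x => x.2.1) (by fun_prop) hεN hN
  refine klDiv2_le_klDiv2_of_klDiv_le (by simp) (by simp) ?_
  exact klDiv_bern01_le measurable_id hmeanN (by linarith) hmeanK
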